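/- If L is a group, then for all i the commutator-associator subloop L_i equals the lower central series term γ_i L. -/

import Mathlib

/-- A loop: a quasigroup with a two-sided identity. -/
class Loop (α : Type*) extends Mul α, One α where
  ldiv : α → α → α
  rdiv : α → α → α
  one_mul : ∀ a : α, 1 * a = a
  mul_one : ∀ a : α, a * 1 = a
  mul_ldiv : ∀ a b : α, a * ldiv a b = b
  ldiv_mul : ∀ a b : α, ldiv a (a * b) = b
  rdiv_mul : ∀ a b : α, rdiv a b * b = a
  mul_rdiv : ∀ a b : α, rdiv (a * b) b = a

namespace Loop

variable {α : Type*} [Loop α]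

/-- The commutator `[a,b] = (ba)\(ab)`. -/
def comm (a b : α) : α := ldiv (b * a) (a * b)

/-- The associator `(a,b,c) = (a(bc))\((ab)c)`. -/
def assoc (a b c : α) : α := ldiv (a * (b * c)) ((a * b) * c)

/-- The associator deviation indexed by a list of indices `αs = [α_n, ..., α_1]`
(stored with the *last* index first) applied to a list of arguments.
Level `0` (empty index list) is the associator. -/
def dev : List ℕ → List α → α
  | [], [a, b, c] => assoc a b c
  | (k :: rest), args =>
      let A : α → α := fun x => dev rest (args.take (k - 1) ++ x :: args.drop (k + 1))
      ldiv (A (args.getD (k - 1) 1) * A (args.getD k 1))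
        (A (args.getD (k - 1) 1 * args.getD k 1))
  | _, _ => 1

/-- A subset is a subloop if it contains `1` and is closed under
multiplication and both divisions. -/
def IsSubloop (S : Set α) : Prop :=
  (1 : α) ∈ S ∧ ∀ a ∈ S, ∀ b ∈ S, a * b ∈ S ∧ ldiv a b ∈ S ∧ rdiv a b ∈ S

/-- A subloop is normal if `xN = Nx`, `(Nx)y = N(xy)` and `y(xN) = (yx)N`. -/
def IsNormal (S : Set α) : Prop :=
  IsSubloop S ∧
  (∀ x : α, {z | ∃ n ∈ S, z = x * n} = {z | ∃ n ∈ S, z = n * x}) ∧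
  (∀ x y : α, {z | ∃ n ∈ S, z = (n * x) * y} = {z | ∃ n ∈ S, z = n * (x * y)}) ∧
  (∀ x y : α, {z | ∃ n ∈ S, z = y * (x * n)} = {z | ∃ n ∈ S, z = (y * x) * n})

/-- `N/M` is central in `L/M`: all commutators and associators involving an
element of `N` lie in `M`. -/
def CentralMod (N M : Set α) : Prop :=
  ∀ n ∈ N, ∀ x y : α,
    comm n x ∈ M ∧ comm x n ∈ M ∧
    assoc n x y ∈ M ∧ assoc x n y ∈ M ∧ assoc x y n ∈ M

/-- `[N,L]`: the smallest normal subloop `M` such that `N/M` is central in `L/M`. -/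
def bracket (N : Set α) : Set α := ⋂₀ {M | IsNormal M ∧ CentralMod N M}

end Loop

/-- The lower central series of a loop: `γ 1 = L`, `γ (i+1) = [γ i, L]`. -/
def Loop.gamma (α : Type*) [Loop α] : ℕ → Set α
  | 0 => Set.univ
  | 1 => Set.univ
  | (n + 2) => Loop.bracket (Loop.gamma α (n + 1))

namespace Loop

variable {α : Type*} [Loop α]

/-- A family `M i` of normal subloops is admissible for the
commutator-associator filtration. -/
def Admissible (M : ℕ → Set α) : Prop :=
  (∀ i, IsNormal (M i)) ∧ M 1 = Set.univ ∧
  (∀ i p q, 1 ≤ p → 1 ≤ q → i ≤ p + q →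
    ∀ a ∈ M p, ∀ b ∈ M q, comm a b ∈ M i) ∧
  (∀ i p q r, 1 ≤ p → 1 ≤ q → 1 ≤ r → i ≤ p + q + r →
    ∀ a ∈ M p, ∀ b ∈ M q, ∀ c ∈ M r, assoc a b c ∈ M i) ∧
  (∀ (i : ℕ) (idx ps : List ℕ) (xs : List α), idx ≠ [] →
    ps.length = idx.length + 3 → xs.length = idx.length + 3 →
    (∀ j < idx.length, 1 ≤ idx.getD j 0 ∧ idx.getD j 0 ≤ (idx.length - j) + 2) →
    (∀ j < ps.length, 1 ≤ ps.getD j 0 ∧ xs.getD j 1 ∈ M (ps.getD j 0)) →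
    i ≤ ps.sum → dev idx xs ∈ M i)

/-- The commutator-associator filtration: the smallest admissible family. -/
def casub (α : Type*) [Loop α] (i : ℕ) : Set α :=
  ⋂₀ {S | ∃ M : ℕ → Set α, Admissible M ∧ S = M i}

/-- Congruence modulo a (normal) subloop: `x ≡ y mod N` iff `x ∈ yN`. -/
def ModEq (N : Set α) (x y : α) : Prop := ∃ n ∈ N, x = y * n

/-- Loop homomorphisms: maps preserving multiplication. -/
def IsLoopHom {β : Type*} [Loop β] (φ : α → β) : Prop :=
  ∀ a b : α, φ (a * b) = φ a * φ b

/-- The subloop generated by a subset. -/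
def closure (S : Set α) : Set α := ⋂₀ {T | IsSubloop T ∧ S ⊆ T}

/-- Left-normed powers: `ypow y m = ((...(yy)y)...)y`. -/
def ypow (y : α) : ℕ → α
  | 0 => 1
  | (m + 1) => ypow y m * y

end Loop

section Higman

variable {L B : Type*} [Loop L] [AddCommGroup B]

/-- Multiplication in Higman's loop `(L, B)`. -/
def hmul (f : L → L → B) (x y : L × B) : L × B :=
  (x.1 * y.1, x.2 + y.2 + f x.1 y.1)

/-- Left division in Higman's loop: `(l2,b2)\(l1,b1) = (l2\l1, b1-b2-f(l2, l2\l1))`. -/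
def hldiv (f : L → L → B) (x y : L × B) : L × B :=
  (Loop.ldiv x.1 y.1, y.2 - x.2 - f x.1 (Loop.ldiv x.1 y.1))

/-- Right division in Higman's loop: `(l1,b1)/(l2,b2) = (l1/l2, b1-b2-f(l1/l2, l2))`. -/
def hrdiv (f : L → L → B) (x y : L × B) : L × B :=
  (Loop.rdiv x.1 y.1, x.2 - y.2 - f (Loop.rdiv x.1 y.1) y.1)

/-- The commutator in Higman's loop. -/
def hcomm (f : L → L → B) (x y : L × B) : L × B :=
  hldiv f (hmul f y x) (hmul f x y)

/-- The associator in Higman's loop. -/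
def hassoc (f : L → L → B) (x y z : L × B) : L × B :=
  hldiv f (hmul f x (hmul f y z)) (hmul f (hmul f x y) z)

end Higman

/-- A group is a loop with `a \ b = a⁻¹ b` and `a / b = a b⁻¹`. -/
instance (priority := 100) groupLoop (G : Type*) [Group G] : Loop G where
  mul := (· * ·)
  one := 1
  ldiv a b := a⁻¹ * b
  rdiv a b := a * b⁻¹
  one_mul := one_mul
  mul_one := mul_one
  mul_ldiv a b := by group
  ldiv_mul a b := by group
  rdiv_mul a b := by group
  mul_rdiv a b := by group

open scoped commutatorElement

section Aux
variable {G : Type*} [Group G]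

theorem lmul (a b : G) : @HMul.hMul G G G (@instHMul G (@Loop.toMul G (groupLoop G))) a b = a * b := rfl

theorem lone : @One.one G (@Loop.toOne G (groupLoop G)) = 1 := rfl

theorem lldiv (a b : G) : Loop.ldiv a b = a⁻¹ * b := rfl

theorem lrdiv (a b : G) : Loop.rdiv a b = a * b⁻¹ := rfl

theorem comm_def (a b : G) : Loop.comm a b = ⁅a⁻¹, b⁻¹⁆ := by
  simp only [Loop.comm, lldiv, lmul, commutatorElement_def]
  group

theorem assoc_eq_one (a b c : G) : Loop.assoc a b c = 1 := by
  simp only [Loop.assoc, lldiv, lmul]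
  group
end Aux
section Aux2
variable {G : Type*} [Group G]

theorem dev_eq_one (idx : List ℕ) : ∀ xs : List G, Loop.dev idx xs = 1 := by
  induction idx with
  | nil =>
    intro xs
    rcases xs with _ | ⟨a, _ | ⟨b, _ | ⟨c, _ | l⟩⟩⟩ <;>
      simp [Loop.dev, assoc_eq_one]
  | cons k rest ih =>
    intro xs
    simp [Loop.dev, ih, lldiv, lmul, lone]

theorem three_subgroups {H₁ H₂ H₃ N : Subgroup G} [N.Normal]
    (h1 : ⁅⁅H₂, H₃⁆, H₁⁆ ≤ N) (h2 : ⁅⁅H₃, H₁⁆, H₂⁆ ≤ N) : ⁅⁅H₁, H₂⁆, H₃⁆ ≤ N := by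
  set π := QuotientGroup.mk' N with hπ
  have key : ∀ K : Subgroup G, K.map π = ⊥ ↔ K ≤ N := by
    intro K
    rw [Subgroup.map_eq_bot_iff, hπ, QuotientGroup.ker_mk']
  have h1' : ⁅⁅H₂.map π, H₃.map π⁆, H₁.map π⁆ = ⊥ := by
    rw [← Subgroup.map_commutator, ← Subgroup.map_commutator, key]; exact h1
  have h2' : ⁅⁅H₃.map π, H₁.map π⁆, H₂.map π⁆ = ⊥ := by
    rw [← Subgroup.map_commutator, ← Subgroup.map_commutator, key]; exact h2
  have h3 := Subgroup.commutator_commutator_eq_bot_of_rotate h1' h2'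
  rw [← Subgroup.map_commutator, ← Subgroup.map_commutator, key] at h3
  exact h3

theorem lcs_comm : ∀ (n m : ℕ),
    ⁅Subgroup.lowerCentralSeries (⊤ : Subgroup G) m, Subgroup.lowerCentralSeries (⊤ : Subgroup G) n⁆ ≤ Subgroup.lowerCentralSeries (⊤ : Subgroup G) (m + n + 1)
  | 0, m => by
    rw [Subgroup.lowerCentralSeries_zero]
    exact le_of_eq rfl
  | (n + 1), m => by
    have h1 : ⁅⁅(⊤ : Subgroup G), Subgroup.lowerCentralSeries (⊤ : Subgroup G) m⁆, Subgroup.lowerCentralSeries (⊤ : Subgroup G) n⁆ ≤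
        Subgroup.lowerCentralSeries (⊤ : Subgroup G) (m + (n + 1) + 1) := by
      rw [Subgroup.commutator_comm (⊤ : Subgroup G) (Subgroup.lowerCentralSeries (⊤ : Subgroup G) m)]
      calc ⁅⁅Subgroup.lowerCentralSeries (⊤ : Subgroup G) m, ⊤⁆, Subgroup.lowerCentralSeries (⊤ : Subgroup G) n⁆
          = ⁅Subgroup.lowerCentralSeries (⊤ : Subgroup G) (m + 1), Subgroup.lowerCentralSeries (⊤ : Subgroup G) n⁆ := rfl
        _ ≤ Subgroup.lowerCentralSeries (⊤ : Subgroup G) (m + 1 + n + 1) := lcs_comm n (m + 1)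
        _ = Subgroup.lowerCentralSeries (⊤ : Subgroup G) (m + (n + 1) + 1) := by ring_nf
    have h2 : ⁅⁅Subgroup.lowerCentralSeries (⊤ : Subgroup G) m, Subgroup.lowerCentralSeries (⊤ : Subgroup G) n⁆, (⊤ : Subgroup G)⁆ ≤
        Subgroup.lowerCentralSeries (⊤ : Subgroup G) (m + (n + 1) + 1) := by
      calc ⁅⁅Subgroup.lowerCentralSeries (⊤ : Subgroup G) m, Subgroup.lowerCentralSeries (⊤ : Subgroup G) n⁆, (⊤ : Subgroup G)⁆
          ≤ ⁅Subgroup.lowerCentralSeries (⊤ : Subgroup G) (m + n + 1), (⊤ : Subgroup G)⁆ :=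
            Subgroup.commutator_mono (lcs_comm n m) le_rfl
        _ = Subgroup.lowerCentralSeries (⊤ : Subgroup G) (m + n + 1 + 1) := rfl
        _ = Subgroup.lowerCentralSeries (⊤ : Subgroup G) (m + (n + 1) + 1) := by ring_nf
    have h3 := three_subgroups (N := Subgroup.lowerCentralSeries (⊤ : Subgroup G) (m + (n + 1) + 1))
      (H₁ := Subgroup.lowerCentralSeries (⊤ : Subgroup G) n) (H₂ := (⊤ : Subgroup G)) (H₃ := Subgroup.lowerCentralSeries (⊤ : Subgroup G) m) h1 h2
    calc ⁅Subgroup.lowerCentralSeries (⊤ : Subgroup G) m, Subgroup.lowerCentralSeries (⊤ : Subgroup G) (n + 1)⁆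
        = ⁅⁅Subgroup.lowerCentralSeries (⊤ : Subgroup G) n, ⊤⁆, Subgroup.lowerCentralSeries (⊤ : Subgroup G) m⁆ := Subgroup.commutator_comm _ _
      _ ≤ Subgroup.lowerCentralSeries (⊤ : Subgroup G) (m + (n + 1) + 1) := h3

end Aux2
section Aux3
variable {G : Type*} [Group G]

theorem subgroup_isSubloop (H : Subgroup G) : Loop.IsSubloop (H : Set G) := by
  refine ⟨H.one_mem, fun a ha b hb => ⟨?_, ?_, ?_⟩⟩
  · exact mul_mem ha hb
  · show Loop.ldiv a b ∈ H
    rw [lldiv]; exact mul_mem (inv_mem ha) hb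
  · show Loop.rdiv a b ∈ H
    rw [lrdiv]; exact mul_mem ha (inv_mem hb)

theorem subgroup_isNormal (H : Subgroup G) [hN : H.Normal] : Loop.IsNormal (H : Set G) := by
  refine ⟨subgroup_isSubloop H, ?_, ?_, ?_⟩
  · intro x
    ext z
    simp only [Set.mem_setOf_eq, lmul]
    constructor
    · rintro ⟨n, hn, rfl⟩
      exact ⟨x * n * x⁻¹, hN.conj_mem n hn x, by group⟩
    · rintro ⟨n, hn, rfl⟩
      exact ⟨x⁻¹ * n * x, by simpa using hN.conj_mem n hn x⁻¹, by group⟩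
  · intro x y
    ext z
    simp only [Set.mem_setOf_eq, lmul]
    constructor
    · rintro ⟨n, hn, rfl⟩; exact ⟨n, hn, by group⟩
    · rintro ⟨n, hn, rfl⟩; exact ⟨n, hn, by group⟩
  · intro x y
    ext z
    simp only [Set.mem_setOf_eq, lmul]
    constructor
    · rintro ⟨n, hn, rfl⟩; exact ⟨n, hn, by group⟩
    · rintro ⟨n, hn, rfl⟩; exact ⟨n, hn, by group⟩

/-- The canonical admissible family in a group. -/
theorem lcs_admissible : Loop.Admissible (fun i => ((Subgroup.lowerCentralSeries (⊤ : Subgroup G) (i - 1) : Subgroup G) : Set G)) := by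
  refine ⟨fun i => subgroup_isNormal _, by simp [Subgroup.lowerCentralSeries_zero], ?_, ?_, ?_⟩
  · intro i p q hp hq hi a ha b hb
    show Loop.comm a b ∈ Subgroup.lowerCentralSeries (⊤ : Subgroup G) (i - 1)
    rw [comm_def]
    have key : ⁅a⁻¹, b⁻¹⁆ ∈ Subgroup.lowerCentralSeries (⊤ : Subgroup G) ((p - 1) + (q - 1) + 1) :=
      lcs_comm (q - 1) (p - 1) (Subgroup.commutator_mem_commutator (inv_mem ha) (inv_mem hb))
    refine Subgroup.lowerCentralSeries_antitone _ ?_ key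
    omega
  · intro i p q r hp hq hr hi a ha b hb c hc
    show Loop.assoc a b c ∈ Subgroup.lowerCentralSeries (⊤ : Subgroup G) (i - 1)
    rw [assoc_eq_one]
    exact Subgroup.one_mem _
  · intro i idx ps xs _ _ _ _ _ _
    show Loop.dev idx xs ∈ Subgroup.lowerCentralSeries (⊤ : Subgroup G) (i - 1)
    rw [dev_eq_one]
    exact Subgroup.one_mem _

end Aux3
section Aux4
variable {G : Type*} [Group G]

/-- Turn an admissible-family member into a subgroup. -/
def subloopSubgroup {S : Set G} (h : Loop.IsSubloop S) : Subgroup G where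
  carrier := S
  one_mem' := h.1
  mul_mem' := fun {a b} ha hb => (h.2 a ha b hb).1
  inv_mem' := fun {a} ha => by
    have := (h.2 a ha 1 h.1).2.1
    rwa [lldiv, mul_one] at this

theorem lcs_subset_admissible {M : ℕ → Set G} (hM : Loop.Admissible M) :
    ∀ k : ℕ, ((Subgroup.lowerCentralSeries (⊤ : Subgroup G) k : Subgroup G) : Set G) ⊆ M (k + 1) := by
  intro k
  induction k with
  | zero => rw [hM.2.1]; exact Set.subset_univ _
  | succ k ih =>
    have hsub : Loop.IsSubloop (M (k + 1)) := (hM.1 (k + 1)).1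
    have hsub2 : Loop.IsSubloop (M (k + 2)) := (hM.1 (k + 2)).1
    have hle : Subgroup.lowerCentralSeries (⊤ : Subgroup G) (k + 1) ≤ subloopSubgroup hsub2 := by
      rw [show Subgroup.lowerCentralSeries (⊤ : Subgroup G) (k + 1) = ⁅Subgroup.lowerCentralSeries (⊤ : Subgroup G) k, ⊤⁆ from rfl,
        Subgroup.commutator_le]
      intro g hg h _
      have hg' : g⁻¹ ∈ M (k + 1) := (subloopSubgroup hsub).inv_mem (ih hg)
      have hh' : h⁻¹ ∈ M 1 := by rw [hM.2.1]; trivial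
      have := hM.2.2.1 (k + 2) (k + 1) 1 (by omega) le_rfl (by omega) g⁻¹ hg' h⁻¹ hh'
      rw [comm_def, inv_inv, inv_inv] at this
      exact this
    exact fun x hx => hle hx

end Aux4

/-- if `L` is a group, then for all `i ≥ 1` the
commutator-associator subloop `L_i` coincides with the lower central series
term `γ_i L` (in Mathlib's indexing, `γ_i L = lowerCentralSeries L (i-1)`). -/
theorem casub_eq_lowerCentralSeries {G : Type*} [Group G] :
    ∀ i : ℕ, 1 ≤ i →
      Loop.casub G i = ((Subgroup.lowerCentralSeries (⊤ : Subgroup G) (i - 1) : Subgroup G) : Set G) := by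
  intro i hi
  apply Set.Subset.antisymm
  · exact Set.sInter_subset_of_mem
      ⟨(fun j => ((Subgroup.lowerCentralSeries (⊤ : Subgroup G) (j - 1) : Subgroup G) : Set G)), lcs_admissible, rfl⟩
  · intro x hx
    rw [Loop.casub, Set.mem_sInter]
    rintro S ⟨M, hM, rfl⟩
    obtain ⟨k, rfl⟩ : ∃ k, i = k + 1 := ⟨i - 1, (Nat.succ_pred_eq_of_pos hi).symm⟩
    exact lcs_subset_admissible hM k (by simpa using hx)
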